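/- arXiv:2312.11456 — 2 statements merged into one kernel-verified Lean document; each statement's English description precedes it below -/
import Mathlib

section
/- Offline pessimism with pointwise uncertainty (Theorem 3.1, Option II, deterministic form): suppose the true reward is linear, r*(x,a) = ⟨θ*, φ(x,a)⟩, let θ̂ ∈ ℝ^d and a symmetric positive definite Σ ∈ ℝ^{d×d} satisfy ‖θ̂ − θ*‖_Σ ≤ β for some β ≥ 0, let ν ∈ ℝ^d, and let π̂ be the Gibbs policy of the pessimistic reward r̂(x,a) = ⟨θ̂, φ(x,a)⟩ − β·‖φ(x,a) − ν‖_{Σ^{-1}}. Then for any policy π with supp(π(·|x)) ⊆ supp(π0(·|x)) for all x, J(π) − J(π̂) ≤ 2β·E_{x∼d0, a∼π(·|x)} ‖φ(x,a) − ν‖_{Σ^{-1}} − η·E_{x∼d0} KL(π(·|x)‖π̂(·|x)). -/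
/-!
On each prompt the pessimistic reward `r̂ = ⟨θ̂, φ⟩ - β ‖φ - ν‖_{Σ⁻¹}` sandwiches the true one:
by Cauchy–Schwarz in the dual pair `‖·‖_Σ`, `‖·‖_{Σ⁻¹}`, the gap `r* - r̂` lies between the
constant `c = ⟨θ* - θ̂, ν⟩` and `c + 2β ‖φ - ν‖_{Σ⁻¹}`. The Gibbs variational identity
`E_p r - η KL(p‖π₀) = η log Z_r - η KL(p‖π_r)` turns the regret of `π_r` against `p` into
`E_p (r* - r) - E_{π_r} (r* - r) - η KL(p‖π_r)`, and the sandwich bounds the first two terms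
by `2β E_p ‖φ - ν‖_{Σ⁻¹}`. Averaging over `d₀` gives the theorem.
-/

open Finset Matrix

/-- KL divergence between two distributions on a finite set. -/
noncomputable def KL {A : Type*} [Fintype A] (p q : A → ℝ) : ℝ :=
  ∑ a, p a * Real.log (p a / q a)

/-- KL-regularized value of a policy. -/
noncomputable def J {X A : Type*} [Fintype X] [Fintype A]
    (d0 : X → ℝ) (pi0 : X → A → ℝ) (η : ℝ) (rstar : X → A → ℝ)
    (p : X → A → ℝ) : ℝ :=
  ∑ x, d0 x * ((∑ a, p x a * rstar x a) - η * KL (p x) (pi0 x))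

/-- The matrix-weighted norm ‖v‖_M = √(vᵀ M v). -/
noncomputable def matNorm {d : ℕ} (M : Matrix (Fin d) (Fin d) ℝ) (v : Fin d → ℝ) : ℝ :=
  Real.sqrt (v ⬝ᵥ M.mulVec v)

theorem Matrix.PosSemidef.dotProduct_mulVec_sq_le {n : Type*} [Fintype n] {M : Matrix n n ℝ}
    (hM : M.PosSemidef) (u w : n → ℝ) :
    (u ⬝ᵥ M *ᵥ w) ^ 2 ≤ (u ⬝ᵥ M *ᵥ u) * (w ⬝ᵥ M *ᵥ w) := by
  let := M.toSeminormedAddCommGroup hM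
  let := M.toInnerProductSpace hM
  rw [sq, dotProduct_comm u, dotProduct_comm u, dotProduct_comm w]
  exact real_inner_mul_inner_self_le u w

theorem abs_dotProduct_le_matNorm_mul_matNorm_inv {d : ℕ} {M : Matrix (Fin d) (Fin d) ℝ}
    (hM : M.PosDef) (u v : Fin d → ℝ) : |u ⬝ᵥ v| ≤ matNorm M u * matNorm M⁻¹ v := by
  set w := M⁻¹ *ᵥ v
  have hMw : M *ᵥ w = v := by
    rw [mulVec_mulVec, mul_nonsing_inv _ ((isUnit_iff_isUnit_det M).mp hM.isUnit), one_mulVec]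
  have hw : w ⬝ᵥ M *ᵥ w = v ⬝ᵥ M⁻¹ *ᵥ v := by rw [hMw, dotProduct_comm]
  rw [matNorm, matNorm, ← hw,
    ← Real.sqrt_mul (by simpa using hM.posSemidef.dotProduct_mulVec_nonneg u)]
  apply Real.abs_le_sqrt
  simpa only [hMw] using hM.posSemidef.dotProduct_mulVec_sq_le u w

theorem KL_self {A : Type*} [Fintype A] (p : A → ℝ) : KL p p = 0 := by
  refine Finset.sum_eq_zero fun a _ => ?_
  rcases eq_or_ne (p a) 0 with h | h <;> simp [h]

section Gibbs

variable {A : Type*} [Fintype A]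

noncomputable def partitionFn (q r : A → ℝ) (η : ℝ) : ℝ :=
  ∑ b, q b * Real.exp (r b / η)

noncomputable def gibbs (q r : A → ℝ) (η : ℝ) (a : A) : ℝ :=
  q a * Real.exp (r a / η) / partitionFn q r η

noncomputable def regValue (q : A → ℝ) (η : ℝ) (r p : A → ℝ) : ℝ :=
  ∑ a, p a * r a - η * KL p q

theorem nonempty_of_sum_eq_one {p : A → ℝ} (h : ∑ a, p a = 1) : Nonempty A :=
  Finset.univ_nonempty_iff.mp (Finset.nonempty_of_sum_ne_zero (h.trans_ne one_ne_zero))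

variable {q : A → ℝ} (r : A → ℝ) (η : ℝ)

theorem partitionFn_pos [Nonempty A] (hq : ∀ a, 0 < q a) : 0 < partitionFn q r η :=
  Finset.sum_pos (fun b _ => mul_pos (hq b) (Real.exp_pos _)) Finset.univ_nonempty

theorem gibbs_pos [Nonempty A] (hq : ∀ a, 0 < q a) (a : A) : 0 < gibbs q r η a :=
  div_pos (mul_pos (hq a) (Real.exp_pos _)) (partitionFn_pos r η hq)

theorem sum_gibbs [Nonempty A] (hq : ∀ a, 0 < q a) : ∑ a, gibbs q r η a = 1 := by
  unfold gibbs
  rw [← Finset.sum_div]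
  exact div_self (partitionFn_pos r η hq).ne'

theorem regValue_eq_log_partitionFn_sub_KL_gibbs (hq : ∀ a, 0 < q a) (hη : η ≠ 0)
    {p : A → ℝ} (hpsum : ∑ a, p a = 1) :
    regValue q η r p = η * Real.log (partitionFn q r η) - η * KL p (gibbs q r η) := by
  have := nonempty_of_sum_eq_one hpsum
  have hZ := partitionFn_pos r η hq
  have hterm : ∀ a, p a * Real.log (p a / gibbs q r η a)
      = p a * Real.log (p a / q a) - p a * r a / η + p a * Real.log (partitionFn q r η) := by
    intro a
    rcases eq_or_ne (p a) 0 with hpa | hpa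
    · simp [hpa]
    have hqa := hq a
    rw [gibbs, div_div_eq_mul_div, Real.log_div (by positivity) (by positivity),
      Real.log_mul hpa (by positivity), Real.log_mul hqa.ne' (Real.exp_pos _).ne',
      Real.log_exp, Real.log_div hpa hqa.ne']
    ring
  have hKL : KL p (gibbs q r η)
      = KL p q - (∑ a, p a * r a) / η + Real.log (partitionFn q r η) := by
    rw [KL, KL, Finset.sum_congr rfl fun a _ => hterm a, Finset.sum_add_distrib,
      Finset.sum_sub_distrib, ← Finset.sum_mul, hpsum, ← Finset.sum_div, one_mul]
  rw [regValue, hKL]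
  field_simp
  ring

theorem regValue_sub_regValue_gibbs (hq : ∀ a, 0 < q a) (hη : η ≠ 0) (rstar : A → ℝ)
    {p : A → ℝ} (hpsum : ∑ a, p a = 1) :
    regValue q η rstar p - regValue q η rstar (gibbs q r η)
      = ∑ a, p a * (rstar a - r a) - ∑ a, gibbs q r η a * (rstar a - r a)
        - η * KL p (gibbs q r η) := by
  have := nonempty_of_sum_eq_one hpsum
  have hshift : ∀ p',
      regValue q η rstar p' = regValue q η r p' + ∑ a, p' a * (rstar a - r a) := by
    intro p'
    simp only [regValue, mul_sub, Finset.sum_sub_distrib]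
    ring
  rw [hshift, hshift, regValue_eq_log_partitionFn_sub_KL_gibbs r η hq hη hpsum,
    regValue_eq_log_partitionFn_sub_KL_gibbs r η hq hη (sum_gibbs r η hq), KL_self]
  ring

theorem regValue_sub_regValue_gibbs_le (hq : ∀ a, 0 < q a) (hη : η ≠ 0) {rstar b p : A → ℝ}
    (hp : ∀ a, 0 ≤ p a) (hpsum : ∑ a, p a = 1) (c : ℝ)
    (hlow : ∀ a, c ≤ rstar a - r a) (hup : ∀ a, rstar a - r a ≤ c + b a) :
    regValue q η rstar p - regValue q η rstar (gibbs q r η)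
      ≤ ∑ a, p a * b a - η * KL p (gibbs q r η) := by
  have := nonempty_of_sum_eq_one hpsum
  have hp_gap : ∑ a, p a * (rstar a - r a) ≤ c + ∑ a, p a * b a :=
    calc ∑ a, p a * (rstar a - r a) ≤ ∑ a, p a * (c + b a) :=
          Finset.sum_le_sum fun a _ => mul_le_mul_of_nonneg_left (hup a) (hp a)
      _ = c + ∑ a, p a * b a := by
          rw [Finset.sum_congr rfl fun a _ => mul_add (p a) c (b a), Finset.sum_add_distrib,
            ← Finset.sum_mul, hpsum, one_mul]
  have hgibbs_gap : c ≤ ∑ a, gibbs q r η a * (rstar a - r a) :=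
    calc c = ∑ a, gibbs q r η a * c := by rw [← Finset.sum_mul, sum_gibbs r η hq, one_mul]
      _ ≤ _ := Finset.sum_le_sum fun a _ =>
          mul_le_mul_of_nonneg_left (hlow a) (gibbs_pos r η hq a).le
  rw [regValue_sub_regValue_gibbs r η hq hη rstar hpsum]
  linarith

end Gibbs

theorem J_sub_J {X A : Type*} [Fintype X] [Fintype A] (d0 : X → ℝ) (pi0 : X → A → ℝ) (η : ℝ)
    (rstar p p' : X → A → ℝ) :
    J d0 pi0 η rstar p - J d0 pi0 η rstar p'
      = ∑ x, d0 x *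
          (regValue (pi0 x) η (rstar x) (p x) - regValue (pi0 x) η (rstar x) (p' x)) := by
  simp only [_root_.J, regValue, mul_sub, Finset.sum_sub_distrib]

theorem pessimistic_reward_gap_bounds {d : ℕ} {Sig : Matrix (Fin d) (Fin d) ℝ}
    (hSig : Sig.PosDef) {θstar θhat : Fin d → ℝ} {β : ℝ}
    (hest : matNorm Sig (θhat - θstar) ≤ β) (ν f : Fin d → ℝ) :
    (θstar - θhat) ⬝ᵥ ν ≤ θstar ⬝ᵥ f - (θhat ⬝ᵥ f - β * matNorm Sig⁻¹ (f - ν)) ∧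
      θstar ⬝ᵥ f - (θhat ⬝ᵥ f - β * matNorm Sig⁻¹ (f - ν))
        ≤ (θstar - θhat) ⬝ᵥ ν + 2 * β * matNorm Sig⁻¹ (f - ν) := by
  have hgap : θstar ⬝ᵥ f - θhat ⬝ᵥ f = (θstar - θhat) ⬝ᵥ ν - (θhat - θstar) ⬝ᵥ (f - ν) := by
    simp only [sub_dotProduct, dotProduct_sub]
    ring
  have hcs : |(θhat - θstar) ⬝ᵥ (f - ν)| ≤ β * matNorm Sig⁻¹ (f - ν) :=
    (abs_dotProduct_le_matNorm_mul_matNorm_inv hSig _ _).trans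
      (mul_le_mul_of_nonneg_right hest (Real.sqrt_nonneg _))
  have := abs_le.mp hcs
  constructor <;> linarith

theorem offline_pessimism_optionII_general
    {X A : Type*} [Fintype X] [Fintype A] {d : ℕ}
    (d0 : X → ℝ) (hd0 : ∀ x, 0 ≤ d0 x)
    (η : ℝ) (hη : 0 < η)
    (pi0 : X → A → ℝ) (hpi0pos : ∀ x a, 0 < pi0 x a)
    (φ : X → A → Fin d → ℝ)
    (θstar θhat : Fin d → ℝ)
    (Sig : Matrix (Fin d) (Fin d) ℝ) (hSig : Sig.PosDef)
    (β : ℝ)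
    (hest : matNorm Sig (θhat - θstar) ≤ β)
    (ν : Fin d → ℝ)
    (phat : X → A → ℝ)
    (hgibbs : ∀ x a, phat x a =
      pi0 x a * Real.exp ((θhat ⬝ᵥ φ x a - β * matNorm Sig⁻¹ (φ x a - ν)) / η) /
        ∑ b, pi0 x b * Real.exp ((θhat ⬝ᵥ φ x b - β * matNorm Sig⁻¹ (φ x b - ν)) / η))
    (p : X → A → ℝ)
    (hp : ∀ x a, 0 ≤ p x a) (hpsum : ∀ x, ∑ a, p x a = 1) :
    J d0 pi0 η (fun x a => θstar ⬝ᵥ φ x a) p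
        - J d0 pi0 η (fun x a => θstar ⬝ᵥ φ x a) phat
      ≤ 2 * β * (∑ x, d0 x * ∑ a, p x a * matNorm Sig⁻¹ (φ x a - ν))
        - η * ∑ x, d0 x * KL (p x) (phat x) := by
  have hphat : ∀ x, phat x =
      gibbs (pi0 x) (fun a => θhat ⬝ᵥ φ x a - β * matNorm Sig⁻¹ (φ x a - ν)) η :=
    fun x => funext (hgibbs x)
  have hregret : ∀ x,
      regValue (pi0 x) η (fun a => θstar ⬝ᵥ φ x a) (p x)
          - regValue (pi0 x) η (fun a => θstar ⬝ᵥ φ x a) (phat x)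
        ≤ 2 * β * ∑ a, p x a * matNorm Sig⁻¹ (φ x a - ν) - η * KL (p x) (phat x) := by
    intro x
    have hbounds := fun a => pessimistic_reward_gap_bounds hSig hest ν (φ x a)
    rw [hphat x, Finset.mul_sum]
    simp only [mul_left_comm (2 * β)]
    exact regValue_sub_regValue_gibbs_le _ η (hpi0pos x) hη.ne' (hp x) (hpsum x) _
      (fun a => (hbounds a).1) (fun a => (hbounds a).2)
  calc _ = ∑ x, d0 x * (regValue (pi0 x) η (fun a => θstar ⬝ᵥ φ x a) (p x)
          - regValue (pi0 x) η (fun a => θstar ⬝ᵥ φ x a) (phat x)) := J_sub_J _ _ _ _ _ _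
    _ ≤ ∑ x, d0 x * (2 * β * ∑ a, p x a * matNorm Sig⁻¹ (φ x a - ν) - η * KL (p x) (phat x)) :=
        Finset.sum_le_sum fun x _ => mul_le_mul_of_nonneg_left (hregret x) (hd0 x)
    _ = _ := by
        rw [Finset.mul_sum, Finset.mul_sum, ← Finset.sum_sub_distrib]
        exact Finset.sum_congr rfl fun x _ => by ring

theorem offline_pessimism_optionII
    {X A : Type*} [Fintype X] [Fintype A] {d : ℕ}
    (d0 : X → ℝ) (hd0 : ∀ x, 0 ≤ d0 x) (hd0sum : ∑ x, d0 x = 1)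
    (η : ℝ) (hη : 0 < η)
    (pi0 : X → A → ℝ) (hpi0pos : ∀ x a, 0 < pi0 x a) (hpi0sum : ∀ x, ∑ a, pi0 x a = 1)
    (φ : X → A → Fin d → ℝ)
    (θstar θhat : Fin d → ℝ)
    (Sig : Matrix (Fin d) (Fin d) ℝ) (hSig : Sig.PosDef)
    (β : ℝ) (hβ : 0 ≤ β)
    (hest : matNorm Sig (θhat - θstar) ≤ β)
    (ν : Fin d → ℝ)
    (phat : X → A → ℝ)
    (hgibbs : ∀ x a, phat x a =
      pi0 x a * Real.exp ((θhat ⬝ᵥ φ x a - β * matNorm Sig⁻¹ (φ x a - ν)) / η) /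
        ∑ b, pi0 x b * Real.exp ((θhat ⬝ᵥ φ x b - β * matNorm Sig⁻¹ (φ x b - ν)) / η))
    (p : X → A → ℝ)
    (hp : ∀ x a, 0 ≤ p x a) (hpsum : ∀ x, ∑ a, p x a = 1)
    (hsupp : ∀ x a, p x a ≠ 0 → pi0 x a ≠ 0) :
    J d0 pi0 η (fun x a => θstar ⬝ᵥ φ x a) p
        - J d0 pi0 η (fun x a => θstar ⬝ᵥ φ x a) phat
      ≤ 2 * β * (∑ x, d0 x * ∑ a, p x a * matNorm Sig⁻¹ (φ x a - ν))
        - η * ∑ x, d0 x * KL (p x) (phat x) :=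
  offline_pessimism_optionII_general d0 hd0 η hη pi0 hpi0pos φ θstar θhat Sig hSig β hest ν phat
    hgibbs p hp hpsum
end

section
/- Elliptical potential lemma: let x_1, …, x_T ∈ ℝ^d, let Λ_0 ∈ ℝ^{d×d} be symmetric positive definite, and set Λ_t = Λ_0 + Σ_{i=1}^{t} x_i x_i^⊤. Then (i) log( det(Λ_T)/det(Λ_0) ) ≤ Σ_{i=1}^{T} ‖x_i‖²_{Λ_{i-1}^{-1}}; and (ii) if additionally ‖x_i‖ ≤ L for all i, then Σ_{i=1}^{T} min{1, ‖x_i‖²_{Λ_{i-1}^{-1}}} ≤ 2·log( det(Λ_T)/det(Λ_0) ) ≤ 2d·log( (tr(Λ_0) + T·L²) / (d·det(Λ_0)^{1/d}) ). -/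
/-!
By the matrix determinant lemma, `det Λₜ₊₁ = det Λₜ · (1 + wₜ)` with `wₜ = ‖xₜ‖²_{Λₜ⁻¹} ≥ 0`, so
`log (det Λ_T / det Λ₀) = ∑ log (1 + wₜ)`. Part (i) and the first half of (ii) are then the scalar
inequalities `log (1 + w) ≤ w` and `min 1 w ≤ 2 log (1 + w)`. The second half of (ii) is AM-GM on
the eigenvalues of `Λ_T`, `det Λ_T ≤ (tr Λ_T / d) ^ d`, together with
`tr Λ_T = tr Λ₀ + ∑ ‖xₜ‖² ≤ tr Λ₀ + T L²`.
-/

open Finset Matrix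

theorem Real.min_one_le_two_mul_log_one_add {a : ℝ} (ha : 0 ≤ a) :
    min 1 a ≤ 2 * Real.log (1 + a) :=
  calc min 1 a ≤ 2 * (1 - (1 + a)⁻¹) := by
        have hrw : 2 * (1 - (1 + a)⁻¹) = 2 * a / (1 + a) := by field_simp; ring
        rw [hrw, le_div_iff₀ (by positivity)]
        rcases le_total 1 a with h | h
        · rw [min_eq_left h]; linarith
        · rw [min_eq_right h]; nlinarith
    _ ≤ 2 * Real.log (1 + a) := by
        gcongr; exact Real.one_sub_inv_le_log_of_pos (by linarith)

namespace Matrix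

variable {n : Type*} [Fintype n] [DecidableEq n]

theorem det_add_vecMulVec {R : Type*} [CommRing R] {A : Matrix n n R} (hA : IsUnit A.det)
    (u v : n → R) : (A + vecMulVec u v).det = A.det * (1 + v ⬝ᵥ A⁻¹ *ᵥ u) := by
  rw [vecMulVec_eq Unit, det_add_replicateCol_mul_replicateRow hA, det_unique (n := Unit),
    Matrix.add_apply, one_apply_eq, ← replicateRow_vecMul, replicateRow_mul_replicateCol_apply, dotProduct_mulVec]

theorem det_eq_det_mul_prod_of_add_vecMulVec {R : Type*} [CommRing R] {T : ℕ}
    (u v : Fin T → n → R) (A : ℕ → Matrix n n R) (hA : ∀ t : Fin T, IsUnit (A t).det)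
    (hstep : ∀ t : Fin T, A (t + 1) = A t + vecMulVec (u t) (v t)) :
    (A T).det = (A 0).det * ∏ t, (1 + v t ⬝ᵥ (A t)⁻¹ *ᵥ u t) := by
  induction T with
  | zero => simp
  | succ T ih =>
    have ih' := ih (fun t => u t.castSucc) (fun t => v t.castSucc) (fun t => hA t.castSucc)
      (fun t => hstep t.castSucc)
    simp only [Fin.prod_univ_castSucc, Fin.val_castSucc]
    rw [← mul_assoc, ← ih']
    simpa using congrArg det (hstep (Fin.last T)) ▸ det_add_vecMulVec (hA (Fin.last T)) _ _

omit [DecidableEq n] in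
theorem PosDef.add_sum_vecMulVec_self {A : Matrix n n ℝ} (hA : A.PosDef) {ι : Type*}
    (s : Finset ι) (x : ι → n → ℝ) : (A + ∑ i ∈ s, vecMulVec (x i) (x i)).PosDef :=
  hA.add_posSemidef <| posSemidef_sum s fun i _ => by
    simpa using posSemidef_vecMulVec_self_star (x i)

theorem PosSemidef.det_le_trace_div_card_pow {A : Matrix n n ℝ} (hA : A.PosSemidef) :
    A.det ≤ (A.trace / Fintype.card n) ^ Fintype.card n := by
  rcases isEmpty_or_nonempty n with hn | hn
  · simp
  have amgm := Real.geom_mean_le_arith_mean univ (fun _ => 1) hA.1.eigenvalues (by simp)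
    (by simp [Fintype.card_pos]) fun i _ => hA.eigenvalues_nonneg i
  simp only [Real.rpow_one, sum_const, card_univ, nsmul_eq_mul, mul_one, one_mul] at amgm
  rw [hA.1.det_eq_prod_eigenvalues, hA.1.trace_eq_sum_eigenvalues]
  simp only [RCLike.ofReal_real_eq_id, id] at amgm ⊢
  have hprod : 0 ≤ ∏ i, hA.1.eigenvalues i := prod_nonneg fun i _ => hA.eigenvalues_nonneg i
  calc ∏ i, hA.1.eigenvalues i
      = ((∏ i, hA.1.eigenvalues i) ^ ((Fintype.card n : ℝ)⁻¹)) ^ Fintype.card n :=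
        (Real.rpow_inv_natCast_pow hprod Fintype.card_ne_zero).symm
    _ ≤ _ := by gcongr

theorem PosDef.log_det_div_det_le {A B : Matrix n n ℝ} (hA : A.PosDef) (hB : B.PosDef) {τ : ℝ}
    (hτ : B.trace ≤ τ) :
    Real.log (B.det / A.det) ≤ Fintype.card n *
      Real.log (τ / (Fintype.card n * A.det ^ ((1 : ℝ) / Fintype.card n))) := by
  rcases isEmpty_or_nonempty n with hn | hn
  · simp
  set d := Fintype.card n
  set c := A.det ^ ((1 : ℝ) / d)
  have hAc : A.det = c ^ d := by
    simp only [c, one_div]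
    exact (Real.rpow_inv_natCast_pow hA.det_pos.le Fintype.card_ne_zero).symm
  have hc : 0 < c := Real.rpow_pos_of_pos hA.det_pos _
  have hdet : B.det / A.det ≤ (τ / (d * c)) ^ d := by
    rw [hAc, ← div_div, div_pow]
    gcongr
    have htr : 0 ≤ B.trace / d := div_nonneg hB.posSemidef.trace_nonneg d.cast_nonneg
    exact hB.posSemidef.det_le_trace_div_card_pow.trans (by gcongr)
  calc Real.log (B.det / A.det) ≤ Real.log ((τ / (d * c)) ^ d) :=
        Real.log_le_log (div_pos hB.det_pos hA.det_pos) hdet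
    _ = d * Real.log (τ / (d * c)) := Real.log_pow _ _

end Matrix

theorem Fin.sum_filter_val_lt_add_one {M : Type*} [AddCommMonoid M] {T : ℕ} (f : Fin T → M)
    (t : Fin T) :
    ∑ i ∈ univ.filter (fun i : Fin T => (i : ℕ) < t + 1), f i
      = ∑ i ∈ univ.filter (fun i : Fin T => (i : ℕ) < t), f i + f t := by
  rw [add_comm _ (f t), ← sum_insert (by simp)]
  congr 1
  ext i
  simp only [mem_filter, mem_univ, true_and, mem_insert, Fin.ext_iff]
  omega

theorem elliptical_potential_lemma
    {d : ℕ} (T : ℕ) (x : Fin T → Fin d → ℝ)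
    (Lam0 : Matrix (Fin d) (Fin d) ℝ) (hLam0 : Lam0.PosDef)
    (Lam : ℕ → Matrix (Fin d) (Fin d) ℝ)
    (hLam : ∀ t, Lam t = Lam0 +
      ∑ i ∈ Finset.univ.filter (fun i : Fin T => (i : ℕ) < t), vecMulVec (x i) (x i)) :
    Real.log ((Lam T).det / Lam0.det)
        ≤ ∑ i : Fin T, x i ⬝ᵥ (Lam (i : ℕ))⁻¹.mulVec (x i)
    ∧ ∀ L : ℝ, (∀ i, Real.sqrt (x i ⬝ᵥ x i) ≤ L) →
        (∑ i : Fin T, min 1 (x i ⬝ᵥ (Lam (i : ℕ))⁻¹.mulVec (x i))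
            ≤ 2 * Real.log ((Lam T).det / Lam0.det)
          ∧ 2 * Real.log ((Lam T).det / Lam0.det)
            ≤ 2 * d * Real.log ((Lam0.trace + T * L ^ 2) / (d * Lam0.det ^ ((1:ℝ) / d)))) := by
  have hPD (t : ℕ) : (Lam t).PosDef := hLam t ▸ hLam0.add_sum_vecMulVec_self _ _
  set w : Fin T → ℝ := fun i => x i ⬝ᵥ (Lam i)⁻¹ *ᵥ x i
  have hw (i : Fin T) : 0 ≤ w i := by
    simpa using (hPD i).posSemidef.inv.dotProduct_mulVec_nonneg (x i)
  have hdet : (Lam T).det = Lam0.det * ∏ i, (1 + w i) := by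
    simpa [hLam 0] using det_eq_det_mul_prod_of_add_vecMulVec x x Lam
      (fun t => (hPD t).det_pos.ne'.isUnit)
      (fun t => by rw [hLam, hLam, Fin.sum_filter_val_lt_add_one, add_assoc])
  have hlog : Real.log ((Lam T).det / Lam0.det) = ∑ i, Real.log (1 + w i) := by
    rw [hdet, mul_div_cancel_left₀ _ hLam0.det_pos.ne',
      Real.log_prod fun i _ => by linarith [hw i]]
  refine ⟨hlog ▸ sum_le_sum fun i _ => ?_, fun L hL => ⟨hlog ▸ ?_, ?_⟩⟩
  · linarith [Real.log_le_sub_one_of_pos (by linarith [hw i] : 0 < 1 + w i)]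
  · rw [mul_sum]
    exact sum_le_sum fun i _ => Real.min_one_le_two_mul_log_one_add (hw i)
  · have htr : (Lam T).trace ≤ Lam0.trace + T * L ^ 2 := by
      have hx (i : Fin T) : x i ⬝ᵥ x i ≤ L ^ 2 := (Real.sqrt_le_iff.1 (hL i)).2
      simpa [hLam T, trace_sum] using sum_le_sum (s := univ) fun i _ => hx i
    simpa [mul_assoc] using
      mul_le_mul_of_nonneg_left (hLam0.log_det_div_det_le (hPD T) htr) zero_le_two
end
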